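/- Let n ≥ 1, let φ ∈ L^∞(𝕋^n) be nonzero, and suppose the Toeplitz operator T_φ on H²(𝔻^n) is a partial isometry. Then for every f in the range of T_φ, the function φ̄ f belongs to H²(𝕋^n); that is, all Fourier coefficients of φ̄ f with index outside ℤ₊^n vanish. -/

import Mathlib

noncomputable section

open MeasureTheory Complex Filter Topology ContinuousLinearMap

/-- The `n`-torus `𝕋^n`, with its (normalized, since `T = 1`) Haar measure. -/
abbrev Torus (n : ℕ) : Type := Fin n → UnitAddCircle

/-- The Lebesgue space `L²(𝕋^n)`. -/
abbrev L2T (n : ℕ) : Type := Lp ℂ 2 (volume : Measure (Torus n))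

/-- The character `z ↦ z^k` on the `n`-torus, `k ∈ ℤ^n`. -/
def charFn (n : ℕ) (k : Fin n → ℤ) : Torus n → ℂ := fun z => ∏ i, fourier (k i) (z i)

theorem charFn_continuous (n : ℕ) (k : Fin n → ℤ) : Continuous (charFn n k) :=
  continuous_finset_prod _ fun i _ => (map_continuous (fourier (k i))).comp (continuous_apply i)

theorem charFn_norm (n : ℕ) (k : Fin n → ℤ) (z : Torus n) : ‖charFn n k z‖ = 1 := by
  rw [charFn, norm_prod]
  exact Finset.prod_eq_one fun i _ => Circle.norm_coe _

theorem charFn_memℒp (n : ℕ) (k : Fin n → ℤ) :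
    MemLp (charFn n k) ⊤ (volume : Measure (Torus n)) :=
  memLp_top_of_bound (charFn_continuous n k).aestronglyMeasurable 1
    (Eventually.of_forall fun z => le_of_eq (charFn_norm n k z))

/-- The `k`-th Fourier coefficient `f̂(k) = ∫_{𝕋^n} (conj z^k) f(z) dm(z)`. -/
def mFourierCoeff {n : ℕ} (f : Torus n → ℂ) (k : Fin n → ℤ) : ℂ :=
  ∫ z, (starRingEnd ℂ) (charFn n k z) * f z

theorem mFourierCoeff_congr {n : ℕ} {f g : Torus n → ℂ}
    (h : f =ᵐ[(volume : Measure (Torus n))] g) (k : Fin n → ℤ) :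
    mFourierCoeff f k = mFourierCoeff g k :=
  integral_congr_ae (h.mono fun z hz => by simp only [hz])

theorem integrable_char_mul (n : ℕ) (k : Fin n → ℤ) (f : L2T n) :
    Integrable (fun z => (starRingEnd ℂ) (charFn n k z) * f z)
      (volume : Measure (Torus n)) := by
  have hf : Integrable (⇑f) (volume : Measure (Torus n)) := (Lp.memLp f).integrable one_le_two
  refine hf.bdd_mul (c := 1) ?_ (Eventually.of_forall fun z => ?_)
  · exact (continuous_star.comp (charFn_continuous n k)).aestronglyMeasurable
  · rw [starRingEnd_apply, norm_star, charFn_norm]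

theorem mFourierCoeff_add {n : ℕ} (k : Fin n → ℤ) (f g : L2T n) :
    mFourierCoeff (⇑(f + g)) k = mFourierCoeff (⇑f) k + mFourierCoeff (⇑g) k := by
  rw [mFourierCoeff_congr (Lp.coeFn_add f g) k]
  unfold mFourierCoeff
  simp only [Pi.add_apply, mul_add]
  exact integral_add (integrable_char_mul n k f) (integrable_char_mul n k g)

theorem mFourierCoeff_smul {n : ℕ} (k : Fin n → ℤ) (c : ℂ) (f : L2T n) :
    mFourierCoeff (⇑(c • f)) k = c * mFourierCoeff (⇑f) k := by
  rw [mFourierCoeff_congr (Lp.coeFn_smul c f) k]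
  unfold mFourierCoeff
  have : (fun z => (starRingEnd ℂ) (charFn n k z) * (c • ⇑f) z) =
      fun z => c • ((starRingEnd ℂ) (charFn n k z) * f z) := by
    funext z; simp only [Pi.smul_apply, smul_eq_mul]; ring
  rw [this, integral_smul, smul_eq_mul]

/-- All Fourier coefficients with some negative index vanish (membership in the "analytic"
part, e.g. `H²(𝕋^n)` resp. `H^∞(𝔻^n)` for `L²` resp. `L^∞` functions). -/
def IsAnalyticSymbol {n : ℕ} (φ : Torus n → ℂ) : Prop :=
  ∀ k : Fin n → ℤ, (∃ i, k i < 0) → mFourierCoeff φ k = 0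

/-- `φ ∈ H^∞(𝔻^n) = L^∞(𝕋^n) ∩ H²(𝕋^n)`. -/
def IsHinfty {n : ℕ} (φ : Torus n → ℂ) : Prop :=
  MemLp φ ⊤ (volume : Measure (Torus n)) ∧ IsAnalyticSymbol φ

/-- `φ` is an inner function in `H^∞(𝔻^n)`: it is in `H^∞` and unimodular a.e. on `𝕋^n`. -/
def IsInnerFn {n : ℕ} (φ : Torus n → ℂ) : Prop :=
  IsHinfty φ ∧ ∀ᵐ z ∂(volume : Measure (Torus n)), ‖φ z‖ = 1

/-- `φ` depends only on the variables in `A`: `φ̂(k) = 0` whenever `k j ≠ 0` for some `j ∉ A`. -/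
def DependsOnlyOn {n : ℕ} (φ : Torus n → ℂ) (A : Set (Fin n)) : Prop :=
  ∀ k : Fin n → ℤ, (∃ j, j ∉ A ∧ k j ≠ 0) → mFourierCoeff φ k = 0

/-- The Hardy space `H²(𝔻^n) ≅ H²(𝕋^n)` as a subspace of `L²(𝕋^n)`. -/
def hardySpace (n : ℕ) : Submodule ℂ (L2T n) where
  carrier := {f : L2T n | ∀ k : Fin n → ℤ, (∃ i, k i < 0) → mFourierCoeff (⇑f) k = 0}
  add_mem' := by
    intro a b ha hb k hk
    rw [mFourierCoeff_add k a b, ha k hk, hb k hk, add_zero]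
  zero_mem' := by
    intro k hk
    rw [mFourierCoeff_congr (Lp.coeFn_zero ℂ 2 (volume : Measure (Torus _))) k]
    simp [mFourierCoeff]
  smul_mem' := by
    intro c a ha k hk
    rw [mFourierCoeff_smul k c a, ha k hk, mul_zero]

/-- The character `z^k` as an element of `L²(𝕋^n)`. -/
def charLp2 (n : ℕ) (k : Fin n → ℤ) : L2T n :=
  MemLp.toLp (charFn n k) ((charFn_memℒp n k).mono_exponent le_top)

theorem mFourierCoeff_eq_inner (n : ℕ) (k : Fin n → ℤ) (f : L2T n) :
    mFourierCoeff (⇑f) k = @inner ℂ _ _ (charLp2 n k) f := by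
  rw [mFourierCoeff, MeasureTheory.L2.inner_def]
  apply integral_congr_ae
  have hcoe : ⇑(charLp2 n k) =ᵐ[(volume : Measure (Torus n))] charFn n k :=
    MemLp.coeFn_toLp _
  filter_upwards [hcoe] with z hz
  rw [RCLike.inner_apply, hz, mul_comm]

theorem hardySpace_isClosed (n : ℕ) :
    IsClosed ((hardySpace n : Submodule ℂ (L2T n)) : Set (L2T n)) := by
  have h : ((hardySpace n : Submodule ℂ (L2T n)) : Set (L2T n)) =
      ⋂ k ∈ {k : Fin n → ℤ | ∃ i, k i < 0},
        {f : L2T n | @inner ℂ _ _ (charLp2 n k) f = 0} := by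
    ext f
    simp only [Set.mem_iInter, Set.mem_setOf_eq, SetLike.mem_coe]
    constructor
    · intro hf k hk
      rw [← mFourierCoeff_eq_inner]; exact hf k hk
    · intro hf k hk
      rw [mFourierCoeff_eq_inner]; exact hf k hk
  rw [h]
  exact isClosed_biInter fun k _ =>
    isClosed_eq (Continuous.inner continuous_const continuous_id) continuous_const

instance hardySpace_completeSpace (n : ℕ) : CompleteSpace (hardySpace n) :=
  (hardySpace_isClosed n).completeSpace_coe

/-- The Hardy space as a Hilbert space. -/
abbrev HardyH (n : ℕ) := ↥(hardySpace n)

/-- The representative function of an element of the Hardy space. -/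
def repFn {n : ℕ} (f : HardyH n) : Torus n → ℂ := ⇑(f : L2T n)

theorem mul_memℒp {n : ℕ} {φ : Torus n → ℂ} (hφ : MemLp φ ⊤ (volume : Measure (Torus n)))
    (f : L2T n) : MemLp (fun z => φ z * f z) 2 (volume : Measure (Torus n)) := by
  have h := MemLp.smul (r := 2) hφ (Lp.memLp f)
  have e : (⇑f • φ) = fun z => φ z * f z := by
    funext z
    simp only [Pi.smul_apply', smul_eq_mul]
    ring
  rwa [e] at h

/-- Multiplication by `φ ∈ L^∞(𝕋^n)` as a map on `L²(𝕋^n)`. -/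
def mulL2 {n : ℕ} (φ : Torus n → ℂ) (hφ : MemLp φ ⊤ (volume : Measure (Torus n)))
    (f : L2T n) : L2T n :=
  MemLp.toLp (fun z => φ z * f z) (mul_memℒp hφ f)

/-- `IsToeplitz φ hφ T` : `T` is the Toeplitz operator on `H²(𝔻^n)` with symbol
`φ ∈ L^∞(𝕋^n)`, i.e. `T f = P(φ f)` where `P` is the orthogonal projection onto `H²`. -/
def IsToeplitz {n : ℕ} (φ : Torus n → ℂ) (hφ : MemLp φ ⊤ (volume : Measure (Torus n)))
    (T : HardyH n →L[ℂ] HardyH n) : Prop :=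
  ∀ f : HardyH n, T f = Submodule.orthogonalProjectionOnto (hardySpace n) (mulL2 φ hφ (f : L2T n))

/-- `IsMulOp φ T` : `T` is the multiplication operator `M_φ` on `H²(𝔻^n)`. -/
def IsMulOp {n : ℕ} (φ : Torus n → ℂ) (T : HardyH n →L[ℂ] HardyH n) : Prop :=
  ∀ f : HardyH n, repFn (T f) =ᵐ[(volume : Measure (Torus n))] fun z => φ z * repFn f z

/-- A bounded operator is a partial isometry if it is isometric on the orthogonal
complement of its kernel. -/
def IsPartialIsometryOp {E F : Type*} [NormedAddCommGroup E] [InnerProductSpace ℂ E]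
    [NormedAddCommGroup F] [NormedSpace ℂ F] (T : E →L[ℂ] F) : Prop :=
  ∀ x ∈ (LinearMap.ker (T : E →ₗ[ℂ] F))ᗮ, ‖T x‖ = ‖x‖

/-- Hyponormality: `T*T - TT* ≥ 0`. -/
def IsHyponormal {H : Type*} [NormedAddCommGroup H] [InnerProductSpace ℂ H] [CompleteSpace H]
    (T : H →L[ℂ] H) : Prop :=
  (ContinuousLinearMap.adjoint T ∘L T - T ∘L ContinuousLinearMap.adjoint T).IsPositive

/-- A shift: an isometry whose adjoint powers tend to `0` strongly. -/
def IsShiftOp {H : Type*} [NormedAddCommGroup H] [InnerProductSpace ℂ H] [CompleteSpace H]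
    (V : H →L[ℂ] H) : Prop :=
  Isometry V ∧ ∀ x : H, Tendsto (fun m : ℕ => ((ContinuousLinearMap.adjoint V) ^ m) x) atTop (nhds 0)

/-- `g ∈ θ · H²(𝔻^n)`, i.e. `g = θ h` a.e. for some `h ∈ H²(𝔻^n)`. -/
def InMulRange {n : ℕ} (θ : Torus n → ℂ) (g : HardyH n) : Prop :=
  ∃ h : HardyH n, repFn g =ᵐ[(volume : Measure (Torus n))] fun z => θ z * repFn h z

/-- `P` is the orthogonal projection of `H²(𝔻^n)` onto `θ H²(𝔻^n)`. -/
def IsOrthProjOntoMul {n : ℕ} (P : HardyH n →L[ℂ] HardyH n) (θ : Torus n → ℂ) : Prop :=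
  IsIdempotentElem P ∧ IsSelfAdjoint P ∧
    ∀ g : HardyH n, g ∈ LinearMap.range (P : HardyH n →ₗ[ℂ] HardyH n) ↔ InMulRange θ g

/-!
Write `P` for the orthogonal projection onto `H²`. Since `T_φ* f = P(φ̄ f)` and the adjoint of a
partial isometry is isometric on its range, every `f` in the range of `T_φ` satisfies
`‖f‖ ≤ ‖P(φ̄ f)‖ ≤ ‖φ̄ f‖ = ‖φ f‖`. Conversely `‖φ f‖ ≤ ‖T_φ‖ ‖f‖ ≤ ‖f‖`: for `N ≥ 0` we have
`T_φ (z^N f) = P(z^N φ f)`, and the part of `z^N φ f` orthogonal to `H²` lies in the closed span of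
the characters `z^k` with some `k i < 0`, so its squared norm is the sum of `|(φ f)^(k)|²` over the
`k` with some `k i < -N i`, which is small once every `N i` is large. Hence `P` does not shrink
`φ̄ f`, i.e. `φ̄ f ∈ H²`.
-/

open scoped InnerProductSpace

section HilbertSpace

variable {𝕜 E F ι : Type*} [RCLike 𝕜] [NormedAddCommGroup E] [InnerProductSpace 𝕜 E]
  [CompleteSpace E]

theorem Orthonormal.hasSum_norm_inner_sq_of_mem_closure {e : ι → E} (he : Orthonormal 𝕜 e)
    {v : E} (hv : v ∈ (Submodule.span 𝕜 (Set.range e)).topologicalClosure) :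
    HasSum (fun i => ‖⟪e i, v⟫_𝕜‖ ^ 2) (‖v‖ ^ 2) := by
  set S := Submodule.span 𝕜 (Set.range e)
  set K := S.topologicalClosure
  have : CompleteSpace K := S.isClosed_topologicalClosure.completeSpace_coe
  let e' : ι → K := fun i => ⟨e i, S.le_topologicalClosure (Submodule.subset_span ⟨i, rfl⟩)⟩
  have he' : Orthonormal 𝕜 e' := K.subtypeₗᵢ.orthonormal_comp_iff.mp he
  have hspan : Subtype.val '' (Submodule.span 𝕜 (Set.range e') : Set K) = S := by
    rw [← Submodule.coe_subtype, ← Submodule.map_coe, Submodule.map_span, ← Set.range_comp]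
    rfl
  have hdense : ⊤ ≤ (Submodule.span 𝕜 (Set.range e')).topologicalClosure := by
    rw [top_le_iff, ← Submodule.dense_iff_topologicalClosure_eq_top, Subtype.dense_iff]
    intro x hx
    convert hx using 1
    convert (Submodule.topologicalClosure_coe S).symm
    exact hspan
  simpa [HilbertBasis.repr_apply_apply, e'] using
    lp.hasSum_norm (p := 2) (by norm_num) ((HilbertBasis.mk he' hdense).repr ⟨v, hv⟩)

variable [NormedAddCommGroup F] [NormedSpace 𝕜 F]

theorem ContinuousLinearMap.apply_starProjection_orthogonal_ker (T : E →L[𝕜] F) (x : E) :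
    T ((LinearMap.ker (T : E →ₗ[𝕜] F))ᗮ.starProjection x) = T x := by
  have : CompleteSpace (LinearMap.ker (T : E →ₗ[𝕜] F)) := T.isClosed_ker.completeSpace_coe
  have hx := (LinearMap.ker (T : E →ₗ[𝕜] F))ᗮ.sub_starProjection_mem_orthogonal x
  rw [Submodule.orthogonal_orthogonal, LinearMap.mem_ker, map_sub, sub_eq_zero] at hx
  exact hx.symm

end HilbertSpace

namespace IsPartialIsometryOp

variable {E F : Type*} [NormedAddCommGroup E] [InnerProductSpace ℂ E] [CompleteSpace E]

theorem opNorm_le_one [NormedAddCommGroup F] [NormedSpace ℂ F] {T : E →L[ℂ] F}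
    (hT : IsPartialIsometryOp T) : ‖T‖ ≤ 1 :=
  T.opNorm_le_bound zero_le_one fun x => by
    rw [one_mul, ← T.apply_starProjection_orthogonal_ker x,
      hT _ (Submodule.starProjection_apply_mem _ x)]
    exact Submodule.norm_starProjection_apply_le _ x

theorem norm_le_norm_adjoint_apply [NormedAddCommGroup F] [InnerProductSpace ℂ F]
    [CompleteSpace F] {T : E →L[ℂ] F} (hT : IsPartialIsometryOp T) {y : F}
    (hy : y ∈ LinearMap.range (T : E →ₗ[ℂ] F)) : ‖y‖ ≤ ‖ContinuousLinearMap.adjoint T y‖ := by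
  obtain ⟨x, rfl⟩ := hy
  set x₁ := (LinearMap.ker (T : E →ₗ[ℂ] F))ᗮ.starProjection x
  have hx₁ : ‖T x₁‖ = ‖x₁‖ := hT _ (Submodule.starProjection_apply_mem _ x)
  have hTx : (T : E →ₗ[ℂ] F) x = T x₁ := (T.apply_starProjection_orthogonal_ker x).symm
  rw [hTx]
  have key : ‖T x₁‖ * ‖T x₁‖ ≤ ‖ContinuousLinearMap.adjoint T (T x₁)‖ * ‖T x₁‖ :=
    calc ‖T x₁‖ * ‖T x₁‖ = RCLike.re ⟪ContinuousLinearMap.adjoint T (T x₁), x₁⟫_ℂ := by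
          rw [ContinuousLinearMap.adjoint_inner_left, inner_self_eq_norm_mul_norm]
      _ ≤ ‖ContinuousLinearMap.adjoint T (T x₁)‖ * ‖T x₁‖ := by
          rw [hx₁]; exact re_inner_le_norm _ _
  rcases (norm_nonneg (T x₁)).eq_or_lt with h | h
  · rw [← h]; exact norm_nonneg _
  · exact le_of_mul_le_mul_right key h

end IsPartialIsometryOp

theorem integral_fourier_unitAddCircle (m : ℤ) :
    ∫ z : UnitAddCircle, fourier m z = if m = 0 then 1 else 0 := by
  split_ifs with h
  · simp [h, Measure.real, AddCircle.measure_univ]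
  · rw [AddCircle.volume_eq_smul_haarAddCircle, ENNReal.ofReal_one, one_smul]
    exact integral_eq_zero_of_add_right_eq_neg (fourier_add_half_inv_index h one_pos)

theorem integral_charFn (n : ℕ) (k : Fin n → ℤ) :
    ∫ z, charFn n k z = if k = 0 then 1 else 0 := by
  have hprod : ∫ z, charFn n k z = ∏ i, ∫ x : UnitAddCircle, fourier (k i) x := by
    simpa [charFn] using integral_fintype_prod_volume_eq_prod (𝕜 := ℂ)
      (fun i (x : UnitAddCircle) => (fourier (k i) x : ℂ))
  rw [hprod]
  split_ifs with h
  · simp [h, Measure.real, AddCircle.measure_univ]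
  · obtain ⟨i, hi⟩ := Function.ne_iff.mp h
    exact Finset.prod_eq_zero (Finset.mem_univ i)
      (by rw [integral_fourier_unitAddCircle]; exact if_neg hi)

theorem charFn_add (n : ℕ) (k l : Fin n → ℤ) (z : Torus n) :
    charFn n (k + l) z = charFn n k z * charFn n l z := by
  simp only [charFn, Pi.add_apply, fourier_add, ← Finset.prod_mul_distrib]

theorem charFn_neg (n : ℕ) (k : Fin n → ℤ) (z : Torus n) :
    charFn n (-k) z = starRingEnd ℂ (charFn n k z) := by
  simp only [charFn, Pi.neg_apply, fourier_neg, map_prod]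

theorem conj_charFn_mul (n : ℕ) (k l : Fin n → ℤ) (z : Torus n) :
    starRingEnd ℂ (charFn n k z) * charFn n l z = charFn n (l - k) z := by
  rw [← charFn_neg, ← charFn_add, neg_add_eq_sub]

theorem orthonormal_charLp2 (n : ℕ) : Orthonormal ℂ (charLp2 n) := by
  rw [orthonormal_iff_ite]
  intro k l
  have hk : ⇑(charLp2 n k) =ᵐ[volume] charFn n k := MemLp.coeFn_toLp _
  have hl : ⇑(charLp2 n l) =ᵐ[volume] charFn n l := MemLp.coeFn_toLp _
  have hint : ⟪charLp2 n k, charLp2 n l⟫_ℂ = ∫ z, charFn n (l - k) z := by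
    rw [L2.inner_def]
    refine integral_congr_ae ?_
    filter_upwards [hk, hl] with z hkz hlz
    rw [hkz, hlz, RCLike.inner_apply, mul_comm, conj_charFn_mul]
  rw [hint, integral_charFn]
  simp only [sub_eq_zero, eq_comm]

section HardySpace

variable {n : ℕ}

theorem charLp2_mem_orthogonal_hardySpace {k : Fin n → ℤ} (hk : ∃ i, k i < 0) :
    charLp2 n k ∈ (hardySpace n)ᗮ :=
  (Submodule.mem_orthogonal' _ _).2 fun f hf => mFourierCoeff_eq_inner n k f ▸ hf k hk

theorem hardySpace_orthogonal_le_closure_span :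
    (hardySpace n)ᗮ ≤ (Submodule.span ℂ
      (Set.range fun k : {k : Fin n → ℤ // ∃ i, k i < 0} => charLp2 n k)).topologicalClosure := by
  rw [← Submodule.orthogonal_orthogonal_eq_closure]
  refine Submodule.orthogonal_le fun f hf k hk => ?_
  rw [mFourierCoeff_eq_inner]
  exact hf _ (Submodule.subset_span ⟨⟨k, hk⟩, rfl⟩)

theorem mulL2_coeFn {φ : Torus n → ℂ} (hφ : MemLp φ ⊤ volume) (f : L2T n) :
    mulL2 φ hφ f =ᵐ[volume] fun z => φ z * f z :=
  MemLp.coeFn_toLp _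

theorem norm_mulL2_eq_of_norm_eq {φ ψ : Torus n → ℂ} (hφ : MemLp φ ⊤ volume)
    (hψ : MemLp ψ ⊤ volume) (h : ∀ z, ‖φ z‖ = ‖ψ z‖) (f : L2T n) :
    ‖mulL2 φ hφ f‖ = ‖mulL2 ψ hψ f‖ := by
  rw [Lp.norm_def, Lp.norm_def, eLpNorm_congr_ae (mulL2_coeFn hφ f),
    eLpNorm_congr_ae (mulL2_coeFn hψ f)]
  congr 1
  exact eLpNorm_congr_norm_ae (Eventually.of_forall fun z => by simp only [norm_mul, h])

theorem inner_mulL2_left {φ : Torus n → ℂ} (hφ : MemLp φ ⊤ volume) (f g : L2T n) :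
    ⟪mulL2 φ hφ f, g⟫_ℂ = ⟪f, mulL2 (fun z => starRingEnd ℂ (φ z)) hφ.star g⟫_ℂ := by
  rw [L2.inner_def, L2.inner_def]
  refine integral_congr_ae ?_
  filter_upwards [mulL2_coeFn hφ f, mulL2_coeFn (φ := fun z => starRingEnd ℂ (φ z)) hφ.star g]
    with z hf hg
  rw [hf, hg, RCLike.inner_apply, RCLike.inner_apply, map_mul]
  ring

def mulChar (N : Fin n → ℤ) (f : L2T n) : L2T n :=
  mulL2 (charFn n N) (charFn_memℒp n N) f

theorem mulChar_coeFn (N : Fin n → ℤ) (f : L2T n) :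
    mulChar N f =ᵐ[volume] fun z => charFn n N z * f z :=
  mulL2_coeFn _ f

theorem norm_mulChar (N : Fin n → ℤ) (f : L2T n) : ‖mulChar N f‖ = ‖f‖ := by
  rw [Lp.norm_def, Lp.norm_def, eLpNorm_congr_ae (mulChar_coeFn N f)]
  congr 1
  exact eLpNorm_congr_norm_ae
    (Eventually.of_forall fun z => by rw [norm_mul, charFn_norm, one_mul])

theorem mFourierCoeff_mulChar (N : Fin n → ℤ) (f : L2T n) (k : Fin n → ℤ) :
    mFourierCoeff (mulChar N f) k = mFourierCoeff f (k - N) := by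
  rw [mFourierCoeff_congr (mulChar_coeFn N f) k]
  refine integral_congr_ae (Eventually.of_forall fun z => ?_)
  dsimp only
  rw [← mul_assoc, conj_charFn_mul, ← neg_sub, charFn_neg]

theorem mulChar_mem_hardySpace {N : Fin n → ℤ} (hN : 0 ≤ N) {f : L2T n}
    (hf : f ∈ hardySpace n) : mulChar N f ∈ hardySpace n := by
  rintro k ⟨i, hi⟩
  rw [mFourierCoeff_mulChar]
  exact hf _ ⟨i, by simpa using hi.trans_le (hN i)⟩

theorem mulL2_mulChar {φ : Torus n → ℂ} (hφ : MemLp φ ⊤ volume) (N : Fin n → ℤ) (f : L2T n) :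
    mulL2 φ hφ (mulChar N f) = mulChar N (mulL2 φ hφ f) := by
  refine Lp.ext ?_
  filter_upwards [mulL2_coeFn hφ (mulChar N f), mulChar_coeFn N f,
    mulChar_coeFn N (mulL2 φ hφ f), mulL2_coeFn hφ f] with z h₁ h₂ h₃ h₄
  rw [h₁, h₃, h₂, h₄]
  ring

theorem exists_norm_sq_starProjection_orthogonal_mulChar_lt (u : L2T n) {ε : ℝ} (hε : 0 < ε) :
    ∃ N : Fin n → ℤ, 0 ≤ N ∧ ‖(hardySpace n)ᗮ.starProjection (mulChar N u)‖ ^ 2 < ε := by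
  obtain ⟨s, hs⟩ := ((orthonormal_charLp2 n).inner_products_summable u).tsum_vanishing
    (Iio_mem_nhds hε)
  obtain ⟨m, hm⟩ := s.bddBelow
  refine ⟨|m|, abs_nonneg m, ?_⟩
  set t : Set (Fin n → ℤ) := {j | ∃ i, j i + |m i| < 0}
  have hts : Disjoint t s := Set.disjoint_left.2 fun j ⟨i, hi⟩ hj => by
    linarith [hm hj i, neg_abs_le (m i)]
  let shift : {k : Fin n → ℤ // ∃ i, k i < 0} ≃ t :=
    (Equiv.subRight |m|).subtypeEquiv fun k => by simp [t]
  set v := (hardySpace n)ᗮ.starProjection (mulChar |m| u)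
  have hv : HasSum (fun k : {k : Fin n → ℤ // ∃ i, k i < 0} => ‖⟪charLp2 n k, v⟫_ℂ‖ ^ 2)
      (‖v‖ ^ 2) :=
    ((orthonormal_charLp2 n).comp _ Subtype.val_injective).hasSum_norm_inner_sq_of_mem_closure
      (hardySpace_orthogonal_le_closure_span (Submodule.starProjection_apply_mem _ _))
  have hcoeff (k : {k : Fin n → ℤ // ∃ i, k i < 0}) :
      ⟪charLp2 n k, v⟫_ℂ = ⟪charLp2 n (shift k), u⟫_ℂ := by
    rw [← Submodule.inner_starProjection_left_eq_right,
      Submodule.starProjection_eq_self_iff.2 (charLp2_mem_orthogonal_hardySpace k.2),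
      ← mFourierCoeff_eq_inner, mFourierCoeff_mulChar, mFourierCoeff_eq_inner]
    rfl
  calc ‖v‖ ^ 2 = ∑' k, ‖⟪charLp2 n (shift k), u⟫_ℂ‖ ^ 2 := by
        simp_rw [← hcoeff]; exact hv.tsum_eq.symm
    _ = ∑' j : t, ‖⟪charLp2 n j, u⟫_ℂ‖ ^ 2 :=
        shift.tsum_eq fun j : t => ‖⟪charLp2 n j, u⟫_ℂ‖ ^ 2
    _ < ε := hs t hts

end HardySpace

namespace IsToeplitz

variable {n : ℕ} {φ : Torus n → ℂ} {hφ : MemLp φ ⊤ volume} {T : HardyH n →L[ℂ] HardyH n}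

theorem norm_mulL2_le (hT : IsToeplitz φ hφ T) (f : HardyH n) :
    ‖mulL2 φ hφ f‖ ≤ ‖T‖ * ‖f‖ := by
  set u := mulL2 φ hφ f
  refine (pow_le_pow_iff_left₀ (norm_nonneg u) (by positivity) two_ne_zero).1 <|
    le_of_forall_pos_le_add fun ε hε => ?_
  obtain ⟨N, hN, hsmall⟩ := exists_norm_sq_starProjection_orthogonal_mulChar_lt u hε
  let fN : HardyH n := ⟨mulChar N f, mulChar_mem_hardySpace hN f.2⟩
  have hTfN : T fN = (hardySpace n).orthogonalProjectionOnto (mulChar N u) := by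
    rw [hT fN, ← mulL2_mulChar]
  have hfN : ‖T fN‖ ≤ ‖T‖ * ‖f‖ := by
    have : ‖fN‖ = ‖f‖ := norm_mulChar N (f : L2T n)
    exact (T.le_opNorm fN).trans_eq (by rw [this])
  calc ‖u‖ ^ 2 = ‖mulChar N u‖ ^ 2 := by rw [norm_mulChar]
    _ = ‖T fN‖ ^ 2 + ‖(hardySpace n)ᗮ.starProjection (mulChar N u)‖ ^ 2 := by
        rw [hTfN]; exact Submodule.norm_sq_eq_add_norm_sq_projection _ _
    _ ≤ (‖T‖ * ‖f‖) ^ 2 + ε := add_le_add (by gcongr) hsmall.le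

theorem adjoint_apply (hT : IsToeplitz φ hφ T) (g : HardyH n) :
    ContinuousLinearMap.adjoint T g =
      (hardySpace n).orthogonalProjectionOnto (mulL2 (fun z => starRingEnd ℂ (φ z)) hφ.star g) :=
  ext_inner_left ℂ fun h => by
    rw [ContinuousLinearMap.adjoint_inner_right, hT h,
      Submodule.inner_orthogonalProjectionOnto_eq_of_mem_right,
      Submodule.inner_orthogonalProjectionOnto_eq_of_mem_left, inner_mulL2_left]

end IsToeplitz

theorem stmt6_general (n : ℕ) (φ : Torus n → ℂ)
    (hφ : MemLp φ ⊤ (volume : Measure (Torus n)))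
    (T : HardyH n →L[ℂ] HardyH n) (hT : IsToeplitz φ hφ T)
    (hPI : IsPartialIsometryOp T) :
    ∀ f : HardyH n, f ∈ LinearMap.range (T : HardyH n →ₗ[ℂ] HardyH n) →
      ∀ k : Fin n → ℤ, (∃ i, k i < 0) →
        mFourierCoeff (fun z => (starRingEnd ℂ) (φ z) * repFn f z) k = 0 := by
  intro f hf
  set g := mulL2 (fun z => starRingEnd ℂ (φ z)) hφ.star f
  have hg : g ∈ hardySpace n := by
    refine (Submodule.mem_iff_norm_starProjection _ g).2 <|
      le_antisymm (Submodule.norm_starProjection_apply_le _ g) ?_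
    calc ‖g‖ = ‖mulL2 φ hφ f‖ :=
          norm_mulL2_eq_of_norm_eq _ _ (fun z => RCLike.norm_conj (φ z)) _
      _ ≤ ‖T‖ * ‖f‖ := hT.norm_mulL2_le f
      _ ≤ ‖f‖ := mul_le_of_le_one_left (norm_nonneg _) hPI.opNorm_le_one
      _ ≤ ‖ContinuousLinearMap.adjoint T f‖ := hPI.norm_le_norm_adjoint_apply hf
      _ = ‖(hardySpace n).starProjection g‖ := by
          rw [hT.adjoint_apply, Submodule.starProjection_apply]; rfl
  intro k hk
  have hcoe : (fun z => starRingEnd ℂ (φ z) * repFn f z) =ᵐ[volume] g :=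
    (mulL2_coeFn (φ := fun z => starRingEnd ℂ (φ z)) hφ.star f).symm
  rw [mFourierCoeff_congr hcoe k]
  exact hg k hk

/-- equation (3.1). If `T_φ` is a partial isometry and `f` is in the range
of `T_φ`, then `conj φ · f ∈ H²(𝕋^n)`: all Fourier coefficients of `conj φ · f` with an
index having a negative coordinate vanish. -/
theorem stmt6 (n : ℕ) (hn : 1 ≤ n) (φ : Torus n → ℂ)
    (hφ : MemLp φ ⊤ (volume : Measure (Torus n)))
    (hφ0 : ¬ φ =ᵐ[(volume : Measure (Torus n))] (0 : Torus n → ℂ))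
    (T : HardyH n →L[ℂ] HardyH n) (hT : IsToeplitz φ hφ T)
    (hPI : IsPartialIsometryOp T) :
    ∀ f : HardyH n, f ∈ LinearMap.range (T : HardyH n →ₗ[ℂ] HardyH n) →
      ∀ k : Fin n → ℤ, (∃ i, k i < 0) →
        mFourierCoeff (fun z => (starRingEnd ℂ) (φ z) * repFn f z) k = 0 :=
  stmt6_general n φ hφ T hT hPI

end
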